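/- Define V4-integrand-term W(d, r) = ∫_{r}^{d} sat((τ - r)/k3) dτ for k3 > 0. Then W(d, r) ≥ 0 for all real d, r, W(d, r) = 0 if and only if d = r, and W(d, r) ≥ |d - r| - k3/2 (hence W(d, r) → ∞ as |d - r| → ∞). -/

import Mathlib

/-!
The saturation `sat` is the derivative of the Huber function `huber x = x²/2` for `|x| ≤ 1`,
`|x| - 1/2` otherwise, so `∫₀ˣ sat = huber x`. Substituting `τ = r + k3 t` gives the closed form
`W k3 d r = k3 * huber ((d - r) / k3)`, and all three properties are elementary facts about `huber`.
-/

noncomputable def sat (η : ℝ) : ℝ := if |η| < 1 then η else Real.sign η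

noncomputable def W (k3 d r : ℝ) : ℝ := ∫ τ in r..d, sat ((τ - r) / k3)

lemma sat_eq_max_min (η : ℝ) : sat η = max (-1) (min η 1) := by
  unfold sat
  split_ifs with h
  · obtain ⟨h1, h2⟩ := abs_lt.mp h
    rw [min_eq_left h2.le, max_eq_right h1.le]
  · rcases le_abs'.mp (not_lt.mp h) with hη | hη
    · rw [Real.sign_of_neg (by linarith), min_eq_left (by linarith), max_eq_left hη]
    · rw [Real.sign_of_pos (by linarith), min_eq_right hη, max_eq_right (by norm_num)]

lemma continuous_sat : Continuous sat := by
  simp only [funext sat_eq_max_min]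
  fun_prop

lemma sat_neg (η : ℝ) : sat (-η) = -sat η := by
  unfold sat
  rw [abs_neg, Real.sign_neg]
  split_ifs <;> rfl

lemma sat_of_abs_le_one {η : ℝ} (h : |η| ≤ 1) : sat η = η := by
  rw [sat_eq_max_min, min_eq_left (abs_le.mp h).2, max_eq_right (abs_le.mp h).1]

lemma sat_of_one_le {η : ℝ} (h : 1 ≤ η) : sat η = 1 := by
  rw [sat_eq_max_min, min_eq_right h, max_eq_right (by norm_num)]

noncomputable def huber (x : ℝ) : ℝ := if |x| ≤ 1 then x ^ 2 / 2 else |x| - 1 / 2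

lemma huber_neg (x : ℝ) : huber (-x) = huber x := by
  simp only [huber, abs_neg, neg_sq]

lemma huber_nonneg (x : ℝ) : 0 ≤ huber x := by
  unfold huber
  split_ifs with h
  · positivity
  · linarith

lemma huber_eq_zero_iff {x : ℝ} : huber x = 0 ↔ x = 0 := by
  refine ⟨fun h => ?_, fun h => by simp [huber, h]⟩
  unfold huber at h
  split_ifs at h with hx
  · simpa using h
  · linarith

lemma abs_sub_half_le_huber (x : ℝ) : |x| - 1 / 2 ≤ huber x := by
  unfold huber
  split_ifs with h
  · nlinarith [sq_abs x, sq_nonneg (|x| - 1)]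
  · rfl

lemma integral_sat_of_nonneg_of_le_one {x : ℝ} (h0 : 0 ≤ x) (h1 : x ≤ 1) :
    ∫ t in (0 : ℝ)..x, sat t = x ^ 2 / 2 := by
  have hsat : Set.EqOn sat (fun t => t) (Set.uIcc 0 x) := by
    intro t ht
    rw [Set.uIcc_of_le h0] at ht
    exact sat_of_abs_le_one (abs_le.mpr ⟨by linarith [ht.1], ht.2.trans h1⟩)
  rw [intervalIntegral.integral_congr hsat, integral_id]
  ring

lemma integral_sat_of_nonneg {x : ℝ} (hx : 0 ≤ x) : ∫ t in (0 : ℝ)..x, sat t = huber x := by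
  rw [huber, abs_of_nonneg hx]
  split_ifs with h1
  · exact integral_sat_of_nonneg_of_le_one hx h1
  · have htail : Set.EqOn sat 1 (Set.uIcc 1 x) := by
      intro t ht
      rw [Set.uIcc_of_le (by linarith)] at ht
      exact sat_of_one_le ht.1
    rw [← intervalIntegral.integral_add_adjacent_intervals (b := 1)
        (continuous_sat.intervalIntegrable _ _) (continuous_sat.intervalIntegrable _ _),
      integral_sat_of_nonneg_of_le_one zero_le_one le_rfl, intervalIntegral.integral_congr htail]
    simp only [Pi.one_apply, intervalIntegral.integral_const, smul_eq_mul, mul_one]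
    ring

/-- The oddness of `sat` reduces negative upper limits to positive ones. -/
lemma integral_sat (x : ℝ) : ∫ t in (0 : ℝ)..x, sat t = huber x := by
  rcases le_total 0 x with hx | hx
  · exact integral_sat_of_nonneg hx
  · have := intervalIntegral.integral_comp_neg (a := 0) (b := x) sat
    simp only [sat_neg, intervalIntegral.integral_neg, neg_zero] at this
    rw [← huber_neg, ← integral_sat_of_nonneg (neg_nonneg.mpr hx),
      intervalIntegral.integral_symm (-x) 0, ← this, neg_neg]

lemma W_eq_mul_huber {k3 : ℝ} (hk3 : k3 ≠ 0) (d r : ℝ) :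
    W k3 d r = k3 * huber ((d - r) / k3) := by
  rw [W, intervalIntegral.integral_comp_sub_right (fun u => sat (u / k3)),
    intervalIntegral.integral_comp_div sat hk3, sub_self, zero_div, integral_sat, smul_eq_mul]

theorem W_properties (k3 : ℝ) (hk3 : 0 < k3) :
    (∀ d r : ℝ, 0 ≤ W k3 d r) ∧
    (∀ d r : ℝ, W k3 d r = 0 ↔ d = r) ∧
    (∀ d r : ℝ, |d - r| - k3 / 2 ≤ W k3 d r) := by
  simp only [W_eq_mul_huber hk3.ne']
  refine ⟨fun d r => mul_nonneg hk3.le (huber_nonneg _), fun d r => ?_, fun d r => ?_⟩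
  · simp [hk3.ne', huber_eq_zero_iff, sub_eq_zero]
  · calc |d - r| - k3 / 2 = k3 * (|(d - r) / k3| - 1 / 2) := by
          rw [abs_div, abs_of_pos hk3]; field_simp
      _ ≤ k3 * huber ((d - r) / k3) := by gcongr; exact abs_sub_half_le_huber _
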